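/- Let C be an extended Choquet cone with an abundance of compact idempotents. If f ∈ A(C), then supp(f) is a compact idempotent of C. -/

import Mathlib

open scoped ENNReal NNReal

/-- The positive real numbers, used as scalars for cones. -/
abbrev PosReal : Type := {t : ℝ // 0 < t}

/-- An extended Choquet cone: an algebraically ordered topological cone that is a lattice
under the algebraic order, with addition distributing over `⊓` and `⊔`, whose topology is
compact, Hausdorff and locally convex. -/
class ECCone (C : Type*) extends AddCommMonoid C, Lattice C, TopologicalSpace C where
  psmul : PosReal → C → C
  psmul_add : ∀ (t : PosReal) (x y : C), psmul t (x + y) = psmul t x + psmul t y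
  add_psmul : ∀ (s t : PosReal) (x : C), psmul (s + t) x = psmul s x + psmul t x
  psmul_mul : ∀ (s t : PosReal) (x : C), psmul s (psmul t x) = psmul (s * t) x
  one_psmul : ∀ x : C, psmul 1 x = x
  psmul_zero : ∀ t : PosReal, psmul t 0 = 0
  le_iff_exists_add : ∀ x y : C, x ≤ y ↔ ∃ z, x + z = y
  add_inf_distrib : ∀ x y z : C, x + (y ⊓ z) = (x + y) ⊓ (x + z)
  add_sup_distrib : ∀ x y z : C, x + (y ⊔ z) = (x + y) ⊔ (x + z)
  continuous_add' : Continuous fun p : C × C => p.1 + p.2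
  continuous_psmul : Continuous fun p : PosReal × C => psmul p.1 p.2
  compact : CompactSpace C
  t2 : T2Space C
  locally_convex : ∀ (x : C) (U : Set C), IsOpen U → x ∈ U →
    ∃ V : Set C, IsOpen V ∧ x ∈ V ∧ V ⊆ U ∧
      ∀ y ∈ V, ∀ z ∈ V, ∀ s t : PosReal, s.1 + t.1 = 1 → psmul s y + psmul t z ∈ V

/-- The way-below relation for functions into `[0,∞]`, relative to a set `S` of functions:
`f ≪ g` iff for every increasing sequence in `S` whose pointwise supremum dominates `g`,
some term of the sequence dominates `f`. -/
def FWayBelow {α : Type*} (S : Set (α → ℝ≥0∞)) (f g : α → ℝ≥0∞) : Prop :=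
  ∀ h : ℕ → α → ℝ≥0∞, (∀ n, h n ∈ S) → Monotone h → (∀ a, g a ≤ ⨆ n, h n a) → ∃ n, f ≤ h n

namespace ECCone

variable {C : Type*} [ECCone C]

/-- `w` is an idempotent: `2w = w`. -/
def IsIdem (w : C) : Prop := w + w = w

/-- `e` is the support idempotent of `x`: the maximum of `{z : x + z = x}`. -/
def IsSuppIdem (x e : C) : Prop := x + e = x ∧ ∀ z : C, x + z = x → z ≤ e

/-- `w₁ ≫ w₂` in the lattice of idempotents with the opposite order: whenever a nonempty
downward directed family of idempotents has an infimum `≤ w₂`, some member is `≤ w₁`. -/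
def IdemWayBelow (w₁ w₂ : C) : Prop :=
  ∀ D : Set C, D.Nonempty → (∀ v ∈ D, IsIdem v) → DirectedOn (· ≥ ·) D →
    ∀ m : C, IsGLB D m → m ≤ w₂ → ∃ v ∈ D, v ≤ w₁

/-- A compact idempotent: `w ≫ w`. -/
def IsCompactIdem (w : C) : Prop := IsIdem w ∧ IdemWayBelow w w

/-- `v` is compact relative to `w`: whenever a nonempty downward directed family of
idempotents has an infimum `≤ v`, some member `u` satisfies `u ⊓ w ≤ v`. -/
def CompactRelTo (v w : C) : Prop :=
  ∀ D : Set C, D.Nonempty → (∀ u ∈ D, IsIdem u) → DirectedOn (· ≥ ·) D →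
    ∀ m : C, IsGLB D m → m ≤ v → ∃ u ∈ D, u ⊓ w ≤ v

/-- `C` has an abundance of compact idempotents: every idempotent is an infimum
of compact idempotents. -/
def HasAbundantCompactIdem (C : Type*) [ECCone C] : Prop :=
  ∀ w : C, IsIdem w → ∃ D : Set C, (∀ v ∈ D, IsCompactIdem v) ∧ IsGLB D w

/-- `C` is strongly connected: `{x : x ≤ w}` is connected for every idempotent `w`. -/
def StronglyConnected (C : Type*) [ECCone C] : Prop :=
  ∀ w : C, IsIdem w → IsConnected {x : C | x ≤ w}

/-- A linear function on a cone: additive, homogeneous, sending `0` to `0`. -/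
def IsLinFun (f : C → ℝ≥0∞) : Prop :=
  f 0 = 0 ∧ (∀ x y : C, f (x + y) = f x + f y) ∧
    ∀ (t : PosReal) (x : C), f (psmul t x) = ENNReal.ofReal t.1 * f x

/-- Membership in `Lsc(C)`: linear and lower semicontinuous. -/
def MemLsc (f : C → ℝ≥0∞) : Prop := IsLinFun f ∧ LowerSemicontinuous f

/-- Membership in `Lsc_σ(C)`: in `Lsc(C)` and `f⁻¹((a,∞])` is σ-compact for all `a < ∞`. -/
def MemLscSigma (f : C → ℝ≥0∞) : Prop :=
  MemLsc f ∧ ∀ a : ℝ≥0, IsSigmaCompact {x : C | (a : ℝ≥0∞) < f x}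

/-- Membership in `A(C)`: linear and continuous. -/
def MemA (f : C → ℝ≥0∞) : Prop := IsLinFun f ∧ Continuous f

/-- `w = supp f`, the supremum of `{x : f x = 0}`. -/
def IsSupp (f : C → ℝ≥0∞) (w : C) : Prop := IsLUB {x : C | f x = 0} w

/-- The relation `f ◁ g`: `f ≤ (1-ε)g` for some `ε > 0`, and `f` is continuous at every
point where `g` is finite. -/
def Lhd (f g : C → ℝ≥0∞) : Prop :=
  (∃ ε : ℝ, 0 < ε ∧ ∀ x, f x ≤ ENNReal.ofReal (1 - ε) * g x) ∧
    ∀ x : C, g x ≠ ⊤ → ContinuousAt f x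

end ECCone

/-! In a compact space with closed order intervals, a nonempty directed set accumulates at its
supremum (or infimum). The zero set of `f ∈ A(C)` is closed and directed upward, so `f` vanishes
at `supp f`, which is therefore idempotent. On idempotents a linear `f` only takes the values `0`
and `∞`. If a downward directed family of idempotents with infimum below `supp f` had no member
below `supp f`, then `f = ∞` on it, hence, by continuity, at its infimum, where `f` vanishes. -/

open Filter Set

theorem DirectedOn.isLUB_mem_closure {α : Type*} [TopologicalSpace α] [CompactSpace α]
    [PartialOrder α] [ClosedIicTopology α] [ClosedIciTopology α] {D : Set α} {m : α}
    (hne : D.Nonempty) (hdir : DirectedOn (· ≤ ·) D) (hm : IsLUB D m) : m ∈ closure D := by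
  have := hne.to_subtype
  have := hdir.isDirectedOrder
  obtain ⟨p, -, hp⟩ := isCompact_univ.exists_clusterPt
    (f := map ((↑) : D → α) atTop) (le_principal_iff.2 univ_mem)
  have hpD : p ∈ closure D := hp.mem_closure_of_mem _ (mem_map.2 (univ_mem' fun v : D => v.2))
  have hub : p ∈ upperBounds D := fun v hv =>
    isClosed_Ici.closure_subset <| hp.mem_closure_of_mem _ <|
      mem_map.2 (mem_of_superset (mem_atTop (⟨v, hv⟩ : D)) fun _ hu => hu)
  have hpm : p ≤ m := isClosed_Iic.closure_subset (closure_mono hm.1 hpD)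
  rwa [← le_antisymm hpm (hm.2 hub)]

theorem DirectedOn.isGLB_mem_closure {α : Type*} [TopologicalSpace α] [CompactSpace α]
    [PartialOrder α] [ClosedIicTopology α] [ClosedIciTopology α] {D : Set α} {m : α}
    (hne : D.Nonempty) (hdir : DirectedOn (· ≥ ·) D) (hm : IsGLB D m) : m ∈ closure D :=
  have : CompactSpace αᵒᵈ := ‹CompactSpace α›
  DirectedOn.isLUB_mem_closure (α := αᵒᵈ) hne hdir hm.dual

namespace ECCone

variable {C : Type*} [ECCone C]

instance : CompactSpace C := compact

instance : T2Space C := t2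

theorem le_add_right (x z : C) : x ≤ x + z :=
  (le_iff_exists_add x (x + z)).2 ⟨z, rfl⟩

instance : ClosedIciTopology C where
  isClosed_Ici x := by
    have hIci : Ici x = range (x + ·) := by
      ext u
      simp only [mem_Ici, mem_range, le_iff_exists_add]
    rw [hIci]
    exact (isCompact_range (continuous_add'.comp (continuous_const.prodMk continuous_id))).isClosed

instance : ClosedIicTopology C where
  isClosed_Iic x := by
    have hIic : Iic x = Prod.fst '' ((fun p : C × C => p.1 + p.2) ⁻¹' {x}) := by
      ext u
      simp [le_iff_exists_add]
    rw [hIic]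
    exact ((isClosed_singleton.preimage continuous_add').isCompact.image continuous_fst).isClosed

namespace IsLinFun

variable {f : C → ℝ≥0∞}

theorem monotone (hf : IsLinFun f) : Monotone f := by
  intro x y hxy
  obtain ⟨z, rfl⟩ := (le_iff_exists_add x y).1 hxy
  rw [hf.2.1 x z]
  exact le_self_add

theorem directedOn_zeroSet (hf : IsLinFun f) : DirectedOn (· ≤ ·) {x | f x = 0} := by
  intro x hx y hy
  refine ⟨x + y, ?_, le_add_right x y, add_comm x y ▸ le_add_right y x⟩
  simp_all [hf.2.1 x y]

theorem eq_zero_or_eq_top_of_isIdem (hf : IsLinFun f) {v : C} (hv : IsIdem v) :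
    f v = 0 ∨ f v = ⊤ := by
  have h : f v + f v = f v := by rw [← hf.2.1, hv]
  by_contra! hne
  exact (ENNReal.lt_add_right hne.2 hne.1).ne' h

end IsLinFun

namespace IsSupp

variable {f : C → ℝ≥0∞} {w : C}

theorem apply_eq_zero (hw : IsSupp f w) (hlin : IsLinFun f) (hcont : Continuous f) :
    f w = 0 :=
  closure_minimal subset_rfl (isClosed_singleton.preimage hcont) <|
    hlin.directedOn_zeroSet.isLUB_mem_closure ⟨0, hlin.1⟩ hw

theorem isIdem (hw : IsSupp f w) (hlin : IsLinFun f) (hfw : f w = 0) : IsIdem w :=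
  le_antisymm (hw.1 (show f (w + w) = 0 by rw [hlin.2.1, hfw, add_zero])) (le_add_right w w)

end IsSupp

end ECCone

theorem stmt_9_general {C : Type*} [ECCone C] (f : C → ℝ≥0∞) (hf : ECCone.MemA f)
    (w : C) (hw : ECCone.IsSupp f w) :
    ECCone.IsCompactIdem w := by
  obtain ⟨hlin, hcont⟩ := hf
  have hfw : f w = 0 := hw.apply_eq_zero hlin hcont
  refine ⟨hw.isIdem hlin hfw, fun D hne hidem hdir m hm hmw => ?_⟩
  by_contra! hD
  have htop : ∀ v ∈ D, f v = ⊤ := fun v hv =>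
    (hlin.eq_zero_or_eq_top_of_isIdem (hidem v hv)).resolve_left fun h0 => hD v hv (hw.1 h0)
  have hfm_top : f m = ⊤ := closure_minimal htop (isClosed_singleton.preimage hcont)
    (hdir.isGLB_mem_closure hne hm)
  have hfm_zero : f m = 0 := le_antisymm (hfw ▸ hlin.monotone hmw) zero_le
  exact ENNReal.top_ne_zero (hfm_top.symm.trans hfm_zero)

/-- On an extended Choquet cone with an abundance of compact idempotents,
the support of a function in `A(C)` is a compact idempotent. -/
theorem stmt_9 {C : Type*} [ECCone C] (habund : ECCone.HasAbundantCompactIdem C)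
    (f : C → ℝ≥0∞) (hf : ECCone.MemA f) (w : C) (hw : ECCone.IsSupp f w) :
    ECCone.IsCompactIdem w :=
  stmt_9_general f hf w hw
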